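/- arXiv:2210.07064 — 2 statements merged into one kernel-verified Lean document; each statement's English description precedes it below -/
import Mathlib

section
/- Let q ∈ [1,∞) and b ∈ BMO(ℝⁿ). Then b² belongs to BMO_b^q; more precisely, there exists a constant C depending only on n and q such that sup over balls B of inf_{c₀,c₁∈ℝ} (⨍_B |b(x)² − c₀ − c₁ b(x)|^q dx)^{1/q} ≤ C ‖b‖_{BMO}². -/
open MeasureTheory Metric Set
open scoped ENNReal NNReal BigOperators

noncomputable section

/-- Shorthand for `ℝⁿ`. -/
abbrev Rn (n : ℕ) := EuclideanSpace ℝ (Fin n)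

/-- Axis-parallel cube with center `c` and half side length `r`. -/
def cube {n : ℕ} (c : Rn n) (r : ℝ) : Set (Rn n) := {y | ∀ i, |y i - c i| ≤ r}

/-- The Hardy–Littlewood maximal function (over axis-parallel cubes), `ℝ≥0∞`-valued. -/
def mFn {n : ℕ} (f : Rn n → ℝ) (x : Rn n) : ℝ≥0∞ :=
  ⨆ (c : Rn n) (r : ℝ) (_ : 0 < r) (_ : x ∈ cube c r),
    (∫⁻ y in cube c r, ENNReal.ofReal |f y|) / volume (cube c r)

/-- A weight: a nonnegative locally integrable function on `ℝⁿ`. -/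
def IsWeight {n : ℕ} (w : Rn n → ℝ) : Prop :=
  (∀ x, 0 ≤ w x) ∧ LocallyIntegrable w volume

/-- The `A₁` constant `‖Mw/w‖_{L^∞}`. -/
def A1Const {n : ℕ} (w : Rn n → ℝ) : ℝ≥0∞ :=
  essSup (fun x => mFn w x / ENNReal.ofReal (w x)) volume

def IsA1 {n : ℕ} (w : Rn n → ℝ) : Prop :=
  IsWeight w ∧ A1Const w < ∞

/-- The `A_p` constant `sup_Q (⨍_Q w) (⨍_Q w^{-1/(p-1)})^{p-1}`. -/
def ApConst {n : ℕ} (p : ℝ) (w : Rn n → ℝ) : ℝ≥0∞ :=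
  ⨆ (c : Rn n) (r : ℝ) (_ : 0 < r),
    ((∫⁻ y in cube c r, ENNReal.ofReal (w y)) / volume (cube c r)) *
      ((∫⁻ y in cube c r, ENNReal.ofReal (w y ^ (-(p - 1)⁻¹))) / volume (cube c r)) ^ (p - 1)

def IsAp {n : ℕ} (p : ℝ) (w : Rn n → ℝ) : Prop :=
  IsWeight w ∧ ApConst p w < ∞

/-- The norm `‖f‖_{L^p(w)} = (∫ |f|^p w)^{1/p}`. -/
def wtLp {n : ℕ} (p : ℝ) (w f : Rn n → ℝ) : ℝ≥0∞ :=
  (∫⁻ x, ENNReal.ofReal |f x| ^ p * ENNReal.ofReal (w x)) ^ (1 / p)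

/-- The (unweighted) norm `‖g‖_{L^p} = (∫ |g|^p)^{1/p}`. -/
def eLpN {n : ℕ} (p : ℝ) (g : Rn n → ℝ) : ℝ≥0∞ :=
  (∫⁻ x, ENNReal.ofReal |g x| ^ p) ^ (1 / p)

/-- The norm `‖g‖_{L^∞}`. -/
def eLinf {n : ℕ} (g : Rn n → ℝ) : ℝ≥0∞ :=
  essSup (fun x => ENNReal.ofReal |g x|) volume

/-- Bounded, measurable, compactly supported function. -/
def BddCS {n : ℕ} (f : Rn n → ℝ) : Prop :=
  Measurable f ∧ (∃ C : ℝ, ∀ x, |f x| ≤ C) ∧ HasCompactSupport f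

/-- Smooth compactly supported function. -/
def SmoothCS {n : ℕ} (f : Rn n → ℝ) : Prop :=
  ContDiff ℝ (⊤ : ℕ∞) f ∧ HasCompactSupport f

/-- The `BMO` norm `sup_B ⨍_B |b - b_B|`, `ℝ≥0∞`-valued (sup over balls). -/
def bmoNorm {n : ℕ} (b : Rn n → ℝ) : ℝ≥0∞ :=
  ⨆ (x : Rn n) (r : ℝ) (_ : 0 < r),
    (∫⁻ y in ball x r, ENNReal.ofReal |b y - ⨍ z in ball x r, b z|) / volume (ball x r)

def IsBMO {n : ℕ} (b : Rn n → ℝ) : Prop :=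
  LocallyIntegrable b volume ∧ bmoNorm b < ∞

/-- A Calderón–Zygmund operator `T` with kernel `K` and modulus of continuity `ω`. -/
structure IsCZO (n : ℕ) (T : (Rn n → ℝ) → Rn n → ℝ) (K : Rn n → Rn n → ℝ) (ω : ℝ → ℝ) : Prop where
  map_add : ∀ f g, T (f + g) = T f + T g
  map_smul : ∀ (c : ℝ) (f), T (c • f) = c • T f
  l2_bounded : ∃ C : ℝ≥0∞, C < ∞ ∧ ∀ f, eLpNorm (T f) 2 volume ≤ C * eLpNorm f 2 volume
  repr : ∀ f, BddCS f → ∀ x ∉ tsupport f, T f x = ∫ y, K x y * f y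
  size : ∃ CK : ℝ, ∀ x y, x ≠ y → |K x y| ≤ CK * ‖x - y‖ ^ (-(n : ℝ))
  smooth : ∀ x y z : Rn n, x ≠ y → 2 * ‖x - z‖ ≤ ‖x - y‖ →
    |K x y - K z y| + |K y x - K y z| ≤ ω (‖x - z‖ / ‖x - y‖) * ‖x - y‖ ^ (-(n : ℝ))
  omega_cont : Continuous ω
  omega_mono : MonotoneOn ω (Set.Ici 0)
  omega_nonneg : ∀ t, 0 ≤ t → 0 ≤ ω t
  omega_subadd : ∀ s t, 0 ≤ s → 0 ≤ t → ω (s + t) ≤ ω s + ω t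

/-- The Dini condition `∫₀¹ ω(t) dt/t < ∞`. -/
def DiniCond (ω : ℝ → ℝ) : Prop := IntegrableOn (fun t => ω t / t) (Set.Ioo 0 1) volume

/-- The log-Dini condition `∫₀¹ ω(t) log(1/t) dt/t < ∞`. -/
def LogDiniCond (ω : ℝ → ℝ) : Prop :=
  IntegrableOn (fun t => ω t * Real.log t⁻¹ / t) (Set.Ioo 0 1) volume

/-- The commutator `[b,T]f = b·Tf - T(bf)`. -/
def czComm {n : ℕ} (b : Rn n → ℝ) (T : (Rn n → ℝ) → Rn n → ℝ) (f : Rn n → ℝ) : Rn n → ℝ :=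
  fun x => b x * T f x - T (fun y => b y * f y) x

/-- Lerner's grand maximal operator `𝓜_T`. -/
def grandM {n : ℕ} (T : (Rn n → ℝ) → Rn n → ℝ) (f : Rn n → ℝ) (x : Rn n) : ℝ≥0∞ :=
  ⨆ (c : Rn n) (r : ℝ) (_ : 0 < r) (_ : x ∈ ball c r),
    essSup (fun z => ENNReal.ofReal |T (((ball c (2 * r))ᶜ).indicator f) z|)
      (volume.restrict (ball c r))

/-!
Choosing `c₀ = -β²` and `c₁ = 2β`, with `β` the mean of `b` over the ball, turns the integrand
into `|b - β|^(2q)`, so the claim is the John–Nirenberg moment bound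
`⨍_B |b - b_B|^p ≤ C ‖b‖^p` for `p = 2q`. After normalising `‖b‖ ≤ 1`, a Calderón–Zygmund
stopping time at height `λ` (Lebesgue differentiation and the Vitali covering lemma) yields disjoint
balls `Bᵢ` with `∑ |Bᵢ| ≲ |B| / λ`, such that `|b - b_B| ≤ λ` a.e. outside the enlarged balls `5Bᵢ`
and `|b_{5Bᵢ} - b_B| ≤ λ`. Hence `|{|b - b_B| ≥ 2λ}| ≤ ∑ᵢ |{y ∈ 5Bᵢ : |b - b_{5Bᵢ}| ≥ λ}|`, and
by induction the level sets decay like `t^(-k)` for every `k`; decay of order `k > p` gives the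
`p`-th moment through a dyadic decomposition of the range.
-/

open Filter Module
open scoped Topology

namespace JohnNirenberg

lemma ofReal_rpow_le_one_add_tsum {p : ℝ} (hp : 0 ≤ p) (s : ℝ) :
    ENNReal.ofReal s ^ p ≤ 1 + ∑' j : ℕ,
      {t : ℝ | 2 ^ j ≤ t}.indicator (fun _ => ENNReal.ofReal (2 ^ (j + 1)) ^ p) s := by
  rcases lt_or_ge s 1 with hs | hs
  · refine le_add_right (ENNReal.rpow_le_one ?_ hp)
    exact ENNReal.ofReal_le_one.2 hs.le
  · obtain ⟨j, hjs, hsj⟩ := exists_nat_pow_near hs one_lt_two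
    calc ENNReal.ofReal s ^ p ≤ ENNReal.ofReal (2 ^ (j + 1)) ^ p :=
          ENNReal.rpow_le_rpow (ENNReal.ofReal_le_ofReal hsj.le) hp
      _ = {t : ℝ | 2 ^ j ≤ t}.indicator (fun _ => ENNReal.ofReal (2 ^ (j + 1)) ^ p) s :=
          (indicator_of_mem (hjs : s ∈ {t : ℝ | 2 ^ j ≤ t})
            (fun _ => ENNReal.ofReal (2 ^ (j + 1)) ^ p)).symm
      _ ≤ _ := ENNReal.le_tsum j |>.trans le_add_self

lemma two_rpow_div_two_pow_lt_one {p : ℝ} {k : ℕ} (hpk : p < k) : (2 : ℝ) ^ p / 2 ^ k < 1 := by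
  rw [div_lt_one (by positivity), ← Real.rpow_natCast]
  exact Real.rpow_lt_rpow_of_exponent_lt one_lt_two hpk

lemma lintegral_ofReal_rpow_le_of_tail {α : Type*} [MeasurableSpace α] {ν : Measure α}
    {f : α → ℝ} (hf : AEMeasurable f ν) {p : ℝ} (hp : 0 ≤ p) {k : ℕ} (hpk : p < k) {M : ℝ}
    (hM : 0 ≤ M) {V : ℝ≥0∞} (huniv : ν univ ≤ V)
    (htail : ∀ t : ℝ, 0 < t → ν {x | t ≤ f x} ≤ ENNReal.ofReal (M / t ^ k) * V) :
    ∫⁻ x, ENNReal.ofReal (f x) ^ p ∂ν ≤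
      ENNReal.ofReal (1 + M * 2 ^ p / (1 - 2 ^ p / 2 ^ k)) * V := by
  set r : ℝ := 2 ^ p / 2 ^ k
  have hr0 : 0 ≤ r := by positivity
  have hr1 : r < 1 := two_rpow_div_two_pow_lt_one hpk
  have hterm : ∀ j : ℕ, ENNReal.ofReal (2 ^ (j + 1)) ^ p * ν {x | 2 ^ j ≤ f x} ≤
      ENNReal.ofReal (M * 2 ^ p) * ENNReal.ofReal r ^ j * V := by
    intro j
    calc ENNReal.ofReal (2 ^ (j + 1)) ^ p * ν {x | 2 ^ j ≤ f x}
        ≤ ENNReal.ofReal ((2 ^ (j + 1)) ^ p) * (ENNReal.ofReal (M / (2 ^ j) ^ k) * V) := by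
          rw [ENNReal.ofReal_rpow_of_nonneg (by positivity) hp]
          gcongr
          exact htail _ (by positivity)
      _ = ENNReal.ofReal (M * 2 ^ p) * ENNReal.ofReal r ^ j * V := by
          rw [← mul_assoc, ← ENNReal.ofReal_mul (by positivity), ← ENNReal.ofReal_pow hr0,
            ← ENNReal.ofReal_mul (by positivity)]
          congr 2
          rw [← Real.rpow_pow_comm zero_le_two, div_pow, ← pow_mul, ← pow_mul, mul_comm k j]
          field_simp
          ring
  calc ∫⁻ x, ENNReal.ofReal (f x) ^ p ∂ν
      ≤ ∫⁻ x, (1 + ∑' j : ℕ, {x | (2 : ℝ) ^ j ≤ f x}.indicator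
          (fun _ => ENNReal.ofReal (2 ^ (j + 1)) ^ p) x) ∂ν :=
        lintegral_mono fun x => ofReal_rpow_le_one_add_tsum hp (f x)
    _ = ν univ + ∑' j : ℕ, ENNReal.ofReal (2 ^ (j + 1)) ^ p * ν {x | 2 ^ j ≤ f x} := by
        have hmeas : ∀ j : ℕ, NullMeasurableSet {x | (2 : ℝ) ^ j ≤ f x} ν := fun j =>
          nullMeasurableSet_le aemeasurable_const hf
        rw [lintegral_add_left measurable_const, lintegral_one, lintegral_tsum fun j =>
          (aemeasurable_const.indicator₀ (hmeas j))]
        simp only [lintegral_indicator_const₀ (hmeas _)]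
    _ ≤ V + ∑' j : ℕ, ENNReal.ofReal (M * 2 ^ p) * ENNReal.ofReal r ^ j * V :=
        add_le_add huniv (ENNReal.tsum_le_tsum hterm)
    _ = ENNReal.ofReal (1 + M * 2 ^ p / (1 - r)) * V := by
        have hgeom : (1 - ENNReal.ofReal r)⁻¹ = ENNReal.ofReal (1 - r)⁻¹ := by
          rw [← ENNReal.ofReal_one, ← ENNReal.ofReal_sub _ hr0,
            ENNReal.ofReal_inv_of_pos (by linarith)]
        rw [ENNReal.tsum_mul_right, ENNReal.tsum_mul_left, ENNReal.tsum_geometric, hgeom,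
          ← ENNReal.ofReal_mul (by positivity), ENNReal.ofReal_add zero_le_one (by positivity),
          ENNReal.ofReal_one, add_mul, one_mul, div_eq_mul_inv]

section MetricMeasure

variable {X : Type*} [PseudoMetricSpace X] [MeasurableSpace X]

def ballAvg (μ : Measure X) (b : X → ℝ) (x : X) (r : ℝ) : ℝ := ⨍ y in ball x r, b y ∂μ

def ballDev (μ : Measure X) (b : X → ℝ) (c : ℝ) (x : X) (r : ℝ) : ℝ :=
  ∫ y in ball x r, |b y - c| ∂μ

def MeanOscLe (μ : Measure X) (b : X → ℝ) (a : ℝ) : Prop :=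
  ∀ x r, 0 < r → ballDev μ b (ballAvg μ b x r) x r ≤ a * μ.real (ball x r)

def LevelSetDecay (μ : Measure X) (b : X → ℝ) (k : ℕ) (M : ℝ) : Prop :=
  ∀ x r, 0 < r → ∀ t : ℝ, 0 < t →
    μ (ball x r ∩ {y | t ≤ |b y - ballAvg μ b x r|}) ≤ ENNReal.ofReal (M / t ^ k) * μ (ball x r)

variable {μ : Measure X} {b : X → ℝ}

lemma ballAvg_const_mul (a : ℝ) (x : X) (r : ℝ) :
    ballAvg μ (fun y => a * b y) x r = a * ballAvg μ b x r :=
  integral_const_mul a _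

lemma MeanOscLe.const_mul {a : ℝ} (h : MeanOscLe μ b a) {c : ℝ} (hc : 0 ≤ c) :
    MeanOscLe μ (fun y => c * b y) (c * a) := by
  intro x r hr
  have hdev : ballDev μ (fun y => c * b y) (ballAvg μ (fun y => c * b y) x r) x r =
      c * ballDev μ b (ballAvg μ b x r) x r := by
    simp only [ballDev, ballAvg_const_mul, ← mul_sub, abs_mul, abs_of_nonneg hc]
    exact integral_const_mul c _
  rw [hdev, mul_assoc]
  exact mul_le_mul_of_nonneg_left (h x r hr) hc

variable [ProperSpace X]

lemma integrableOn_ball (hb : LocallyIntegrable b μ) (x : X) (r : ℝ) :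
    IntegrableOn b (ball x r) μ :=
  (hb.integrableOn_isCompact (isCompact_closedBall x r)).mono_set ball_subset_closedBall

variable [IsFiniteMeasureOnCompacts μ]

lemma measureReal_ball_pos [μ.IsOpenPosMeasure] (x : X) {r : ℝ} (hr : 0 < r) :
    0 < μ.real (ball x r) :=
  ENNReal.toReal_pos (measure_ball_pos μ x hr).ne' measure_ball_lt_top.ne

lemma integrableOn_abs_sub (hb : LocallyIntegrable b μ) (c : ℝ) (x : X) (r : ℝ) :
    IntegrableOn (fun y => |b y - c|) (ball x r) μ :=
  ((integrableOn_ball hb x r).sub (integrableOn_const measure_ball_lt_top.ne)).abs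

lemma ofReal_ballDev (hb : LocallyIntegrable b μ) (c : ℝ) (x : X) (r : ℝ) :
    ENNReal.ofReal (ballDev μ b c x r) = ∫⁻ y in ball x r, ENNReal.ofReal |b y - c| ∂μ :=
  ofReal_integral_eq_lintegral_ofReal (integrableOn_abs_sub hb c x r)
    (Eventually.of_forall fun _ => abs_nonneg _)

lemma ballDev_mono (hb : LocallyIntegrable b μ) (c : ℝ) {x x' : X} {r r' : ℝ}
    (h : ball x r ⊆ ball x' r') : ballDev μ b c x r ≤ ballDev μ b c x' r' :=
  setIntegral_mono_set (integrableOn_abs_sub hb c x' r')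
    (Eventually.of_forall fun _ => abs_nonneg _) h.eventuallyLE

lemma ballDev_le_add (hb : LocallyIntegrable b μ) (c c' : ℝ) (x : X) (r : ℝ) :
    ballDev μ b c' x r ≤ ballDev μ b c x r + |c - c'| * μ.real (ball x r) := by
  have hconst := integrableOn_const (μ := μ) (s := ball x r) measure_ball_lt_top.ne (C := |c - c'|)
  calc ballDev μ b c' x r ≤ ∫ y in ball x r, (|b y - c| + |c - c'|) ∂μ :=
        setIntegral_mono (integrableOn_abs_sub hb c' x r)
          ((integrableOn_abs_sub hb c x r).add hconst) fun y => abs_sub_le (b y) c c'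
    _ = _ := by
        rw [integral_add (integrableOn_abs_sub hb c x r) hconst, setIntegral_const, smul_eq_mul,
          mul_comm]
        rfl

lemma abs_ballAvg_sub_mul_le (hb : LocallyIntegrable b μ) (c : ℝ) (x : X) (r : ℝ) :
    |ballAvg μ b x r - c| * μ.real (ball x r) ≤ ballDev μ b c x r := by
  have hint : μ.real (ball x r) * (ballAvg μ b x r - c) = ∫ y in ball x r, (b y - c) ∂μ := by
    rw [mul_sub, ballAvg, ← smul_eq_mul, measure_smul_setAverage _ measure_ball_lt_top.ne,
      integral_sub (integrableOn_ball hb x r) (integrableOn_const measure_ball_lt_top.ne),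
      setIntegral_const, smul_eq_mul]
  calc |ballAvg μ b x r - c| * μ.real (ball x r)
      = |∫ y in ball x r, (b y - c) ∂μ| := by
        rw [← hint, abs_mul, abs_of_nonneg measureReal_nonneg, mul_comm]
    _ ≤ ballDev μ b c x r := abs_integral_le_integral_abs

end MetricMeasure

variable {E : Type*} [NormedAddCommGroup E] [NormedSpace ℝ E] [FiniteDimensional ℝ E]
  [MeasurableSpace E] [BorelSpace E] {μ : Measure E} [μ.IsAddHaarMeasure]

lemma measure_ball_mul (x : E) {k : ℝ} (hk : 0 < k) (r : ℝ) :
    μ (ball x (k * r)) = ENNReal.ofReal (k ^ finrank ℝ E) * μ (ball x r) := by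
  rw [Measure.addHaar_ball_mul_of_pos μ x hk, Measure.addHaar_ball_center μ x]

lemma measureReal_ball_mul (x : E) {k : ℝ} (hk : 0 < k) (r : ℝ) :
    μ.real (ball x (k * r)) = k ^ finrank ℝ E * μ.real (ball x r) := by
  rw [measureReal_def, measure_ball_mul x hk, ENNReal.toReal_mul,
    ENNReal.toReal_ofReal (by positivity), measureReal_def]

lemma measureReal_closedBall_eq_ball (x : E) {r : ℝ} (hr : 0 < r) :
    μ.real (closedBall x r) = μ.real (ball x r) := by
  simp only [measureReal_def, Measure.addHaar_closedBall μ x hr.le,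
    Measure.addHaar_ball_of_pos μ x hr]

def twoBallConst (n : ℕ) : ℝ := 2 ^ n * (1 + 2 ^ n)

lemma twoBallConst_pos (n : ℕ) : 0 < twoBallConst n := by
  unfold twoBallConst
  positivity

variable {b : E → ℝ}

local notation "d" => finrank ℝ E

lemma ballDev_two_mul_le (hb : LocallyIntegrable b μ) (hosc : MeanOscLe μ b 1) (x : E) {ρ : ℝ}
    (hρ : 0 < ρ) :
    ballDev μ b (ballAvg μ b x ρ) x (2 * ρ) ≤ twoBallConst d * μ.real (ball x ρ) := by
  set c := ballAvg μ b x ρ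
  set c₂ := ballAvg μ b x (2 * ρ)
  have hvol : μ.real (ball x (2 * ρ)) = 2 ^ d * μ.real (ball x ρ) :=
    measureReal_ball_mul x two_pos ρ
  have hpos : 0 < μ.real (ball x ρ) := measureReal_ball_pos x hρ
  have hosc₂ : ballDev μ b c₂ x (2 * ρ) ≤ μ.real (ball x (2 * ρ)) := by
    simpa using hosc x (2 * ρ) (by positivity)
  have hmean : |c₂ - c| ≤ 2 ^ d := by
    have h₁ : |c - c₂| * μ.real (ball x ρ) ≤ ballDev μ b c₂ x ρ := abs_ballAvg_sub_mul_le hb c₂ x ρ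
    have h₂ : ballDev μ b c₂ x ρ ≤ ballDev μ b c₂ x (2 * ρ) :=
      ballDev_mono hb c₂ (ball_subset_ball (by linarith))
    rw [abs_sub_comm]
    exact le_of_mul_le_mul_right (by linarith) hpos
  calc ballDev μ b c x (2 * ρ)
      ≤ ballDev μ b c₂ x (2 * ρ) + |c₂ - c| * μ.real (ball x (2 * ρ)) := ballDev_le_add hb c₂ c x _
    _ ≤ μ.real (ball x (2 * ρ)) + 2 ^ d * μ.real (ball x (2 * ρ)) := by gcongr
    _ = twoBallConst d * μ.real (ball x ρ) := by rw [hvol, twoBallConst]; ring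

lemma ballDev_le_of_radius_ge (hb : LocallyIntegrable b μ) (hosc : MeanOscLe μ b 1) {x₀ x : E}
    {ρ s : ℝ} (hx : x ∈ ball x₀ ρ) (hs : ρ / 5 ≤ s) (hsρ : s ≤ ρ) :
    ballDev μ b (ballAvg μ b x₀ ρ) x s ≤ 10 ^ d * twoBallConst d * μ.real (ball x s) := by
  have hρ : 0 < ρ := pos_of_mem_ball hx
  have hx' : dist x x₀ < ρ := hx
  have hsub : ball x s ⊆ ball x₀ (2 * ρ) := ball_subset_ball' (by linarith)
  have hvol : μ.real (ball x₀ ρ) ≤ 10 ^ d * μ.real (ball x s) :=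
    calc μ.real (ball x₀ ρ) ≤ μ.real (ball x (10 * (ρ / 5))) :=
          measureReal_mono (ball_subset_ball' (by rw [dist_comm]; linarith))
            measure_ball_lt_top.ne
      _ = 10 ^ d * μ.real (ball x (ρ / 5)) := measureReal_ball_mul x (by norm_num) _
      _ ≤ 10 ^ d * μ.real (ball x s) := by
          gcongr
          exact measure_ball_lt_top.ne
  calc ballDev μ b (ballAvg μ b x₀ ρ) x s ≤ ballDev μ b (ballAvg μ b x₀ ρ) x₀ (2 * ρ) :=
        ballDev_mono hb _ hsub
    _ ≤ twoBallConst d * μ.real (ball x₀ ρ) := ballDev_two_mul_le hb hosc x₀ hρ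
    _ ≤ twoBallConst d * (10 ^ d * μ.real (ball x s)) :=
        mul_le_mul_of_nonneg_left hvol (twoBallConst_pos d).le
    _ = _ := by ring

lemma ae_tendsto_average_abs_sub (hb : LocallyIntegrable b μ) :
    ∀ᵐ x ∂μ, Tendsto (fun r => ⨍ y in closedBall x r, |b y - b x| ∂μ) (𝓝[>] 0) (𝓝 0) := by
  filter_upwards [IsUnifLocDoublingMeasure.ae_tendsto_average_norm_sub μ hb 1] with x hx
  have := hx (fun _ : ℝ => x) id tendsto_id
    (by filter_upwards [self_mem_nhdsWithin] with r (hr : 0 < r)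
        simpa using hr.le)
  simpa [Real.norm_eq_abs] using this

lemma exists_lt_ballDev (hb : LocallyIntegrable b μ) {x : E}
    (hx : Tendsto (fun r => ⨍ y in closedBall x r, |b y - b x| ∂μ) (𝓝[>] 0) (𝓝 0))
    {c l : ℝ} (hl : l < |b x - c|) {r₀ : ℝ} (hr₀ : 0 < r₀) :
    ∃ r, 0 < r ∧ r ≤ r₀ ∧ l * μ.real (ball x r) < ballDev μ b c x r := by
  obtain ⟨r, hr_avg, hr, hrr₀⟩ := ((hx.eventually_lt_const (sub_pos.2 hl)).and
    (Ioo_mem_nhdsGT hr₀)).exists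
  refine ⟨r, hr, hrr₀.le, ?_⟩
  have hint : IntegrableOn (fun y => |b y - b x|) (closedBall x r) μ :=
    ((hb.integrableOn_isCompact (isCompact_closedBall x r)).sub
      (integrableOn_const measure_closedBall_lt_top.ne)).abs
  have hsmall : ballDev μ b (b x) x r < (|b x - c| - l) * μ.real (ball x r) :=
    calc ballDev μ b (b x) x r ≤ ∫ y in closedBall x r, |b y - b x| ∂μ :=
          setIntegral_mono_set hint (Eventually.of_forall fun _ => abs_nonneg _)
            ball_subset_closedBall.eventuallyLE
      _ = (⨍ y in closedBall x r, |b y - b x| ∂μ) * μ.real (ball x r) := by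
          rw [← measureReal_closedBall_eq_ball x hr, mul_comm, ← smul_eq_mul,
            measure_smul_setAverage _ measure_closedBall_lt_top.ne]
      _ < (|b x - c| - l) * μ.real (ball x r) :=
          mul_lt_mul_of_pos_right hr_avg (measureReal_ball_pos x hr)
  have htri : |b x - c| * μ.real (ball x r) ≤ ballDev μ b c x r + ballDev μ b (b x) x r :=
    calc |b x - c| * μ.real (ball x r)
        ≤ (|ballAvg μ b x r - c| + |ballAvg μ b x r - b x|) * μ.real (ball x r) := by
          gcongr
          rw [abs_sub_comm _ (b x)]
          linarith [abs_sub_le (b x) (ballAvg μ b x r) c]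
      _ ≤ ballDev μ b c x r + ballDev μ b (b x) x r := by
          rw [add_mul]
          exact add_le_add (abs_ballAvg_sub_mul_le hb c x r) (abs_ballAvg_sub_mul_le hb _ x r)
  rw [sub_mul] at hsmall
  linarith

lemma exists_stopping_radius (hb : LocallyIntegrable b μ) (hosc : MeanOscLe μ b 1) {x₀ x : E}
    {ρ l : ℝ} (hx : x ∈ ball x₀ ρ)
    (hleb : Tendsto (fun r => ⨍ y in closedBall x r, |b y - b x| ∂μ) (𝓝[>] 0) (𝓝 0))
    (hlx : l < |b x - ballAvg μ b x₀ ρ|) (hl : 10 ^ d * twoBallConst d < l) :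
    ∃ r, 0 < r ∧ r ≤ ρ / 5 ∧ l * μ.real (ball x r) < ballDev μ b (ballAvg μ b x₀ ρ) x r ∧
      ballDev μ b (ballAvg μ b x₀ ρ) x (5 * r) ≤ l * μ.real (ball x (5 * r)) := by
  have hρ : 0 < ρ := pos_of_mem_ball hx
  -- All radii in `S` are `< ρ / 5`; an `r ∈ S` above a fifth of `sSup S` has `5 * r ∉ S`.
  let S : Set ℝ := {s | 0 < s ∧ s ≤ ρ ∧ l * μ.real (ball x s) < ballDev μ b (ballAvg μ b x₀ ρ) x s}
  have hS : ∀ s ∈ S, s < ρ / 5 := by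
    rintro s ⟨hs, hsρ, hsl⟩
    by_contra! hs5
    have hdev := ballDev_le_of_radius_ge hb hosc hx hs5 hsρ
    have hpos : 0 < μ.real (ball x s) := measureReal_ball_pos x hs
    nlinarith
  obtain ⟨r₁, hr₁, hr₁ρ, hr₁l⟩ := exists_lt_ballDev hb hleb hlx (by positivity : 0 < ρ / 5)
  have hr₁S : r₁ ∈ S := ⟨hr₁, by linarith, hr₁l⟩
  have hbdd : BddAbove S := ⟨ρ / 5, fun s hs => (hS s hs).le⟩
  have hsup : 0 < sSup S := hr₁.trans_le (le_csSup hbdd hr₁S)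
  obtain ⟨r, ⟨hr, hrρ, hrl⟩, hrsup⟩ :=
    exists_lt_of_lt_csSup ⟨r₁, hr₁S⟩ (by linarith : sSup S / 5 < sSup S)
  have hr5 : r ≤ ρ / 5 := (hS r ⟨hr, hrρ, hrl⟩).le
  refine ⟨r, hr, hr5, hrl, ?_⟩
  by_contra! h5
  have : 5 * r ≤ sSup S := le_csSup hbdd ⟨by positivity, by linarith, h5⟩
  linarith

lemma exists_czFamily (hb : LocallyIntegrable b μ) (hosc : MeanOscLe μ b 1) (x₀ : E) (ρ : ℝ)
    {l : ℝ} (hl : 10 ^ d * twoBallConst d < l) :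
    ∃ (u : Set E) (r : E → ℝ), u.Countable ∧ u.PairwiseDisjoint (fun x => closedBall x (r x)) ∧
      (∀ x ∈ u, x ∈ ball x₀ ρ ∧ 0 < r x ∧ r x ≤ ρ / 5 ∧
        l * μ.real (ball x (r x)) < ballDev μ b (ballAvg μ b x₀ ρ) x (r x) ∧
        ballDev μ b (ballAvg μ b x₀ ρ) x (5 * r x) ≤ l * μ.real (ball x (5 * r x))) ∧
      μ ((ball x₀ ρ ∩ {y | l < |b y - ballAvg μ b x₀ ρ|}) \ ⋃ x ∈ u, closedBall x (5 * r x)) =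
        0 := by
  let T : Set E := {x ∈ ball x₀ ρ | l < |b x - ballAvg μ b x₀ ρ| ∧
    Tendsto (fun r => ⨍ y in closedBall x r, |b y - b x| ∂μ) (𝓝[>] 0) (𝓝 0)}
  choose! r hr using fun x (hx : x ∈ T) => exists_stopping_radius hb hosc hx.1 hx.2.2 hx.2.1 hl
  obtain ⟨u, huT, hdisj, hcov⟩ := Vitali.exists_disjoint_subfamily_covering_enlargement_closedBall
    T id r (ρ / 5) (fun x hx => (hr x hx).2.1) 5 (by norm_num)
  refine ⟨u, r, ?_, hdisj, fun x hx => ⟨(huT hx).1, hr x (huT hx)⟩, ?_⟩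
  · exact hdisj.countable_of_nonempty_interior fun x hx =>
      (nonempty_ball.2 (hr x (huT hx)).1).mono ball_subset_interior_closedBall
  · refine measure_mono_null ?_ (ae_iff.1 (ae_tendsto_average_abs_sub hb))
    intro y hy hyleb
    have hyT : y ∈ T := ⟨hy.1.1, hy.1.2, hyleb⟩
    obtain ⟨z, hzu, hz⟩ := hcov y hyT
    exact hy.2 (mem_biUnion hzu (hz (mem_closedBall_self (hr y hyT).1.le)))

lemma tsum_measure_ball_le (hb : LocallyIntegrable b μ) {c l : ℝ} (hl : 0 < l) {u : Set E}
    (hu : u.Countable) {r : E → ℝ} (hdisj : u.PairwiseDisjoint fun x => ball x (r x)) {x₀ : E}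
    {R : ℝ} (hsub : ∀ x ∈ u, ball x (r x) ⊆ ball x₀ R)
    (hlow : ∀ x ∈ u, l * μ.real (ball x (r x)) ≤ ballDev μ b c x (r x)) :
    ∑' x : u, μ (ball x (r x)) ≤ ENNReal.ofReal (ballDev μ b c x₀ R / l) := by
  have : Countable u := hu.to_subtype
  rw [ENNReal.ofReal_div_of_pos hl, ENNReal.le_div_iff_mul_le (Or.inl (by simpa using hl))
    (Or.inl ENNReal.ofReal_ne_top), mul_comm, ← ENNReal.tsum_mul_left]
  calc ∑' x : u, ENNReal.ofReal l * μ (ball x (r x))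
      ≤ ∑' x : u, ∫⁻ y in ball x (r x), ENNReal.ofReal |b y - c| ∂μ := by
        refine ENNReal.tsum_le_tsum fun x => ?_
        rw [← ofReal_measureReal measure_ball_lt_top.ne, ← ENNReal.ofReal_mul hl.le,
          ← ofReal_ballDev hb]
        exact ENNReal.ofReal_le_ofReal (hlow x x.2)
    _ = ∫⁻ y in ⋃ x : u, ball x (r x), ENNReal.ofReal |b y - c| ∂μ :=
        (lintegral_iUnion (fun _ => measurableSet_ball)
          (fun (x y : u) hxy => hdisj x.2 y.2 (Subtype.val_injective.ne hxy)) _).symm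
    _ ≤ ∫⁻ y in ball x₀ R, ENNReal.ofReal |b y - c| ∂μ :=
        lintegral_mono_set (iUnion_subset fun x => hsub x x.2)
    _ = ENNReal.ofReal (ballDev μ b c x₀ R) := (ofReal_ballDev hb c x₀ R).symm

lemma measure_levelSet_le_tsum_of_cover {s u : Set E} (hu : u.Countable) {R : E → ℝ}
    (hR : ∀ x ∈ u, R x ≠ 0) {c l : ℝ} (havg : ∀ x ∈ u, |ballAvg μ b x (R x) - c| ≤ l)
    (hnull : μ ((s ∩ {y | l < |b y - c|}) \ ⋃ x ∈ u, closedBall x (R x)) = 0) (hl : 0 < l) :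
    μ (s ∩ {y | 2 * l ≤ |b y - c|}) ≤
      ∑' x : u, μ (ball x (R x) ∩ {y | l ≤ |b y - ballAvg μ b x (R x)|}) := by
  have hcover : s ∩ {y | 2 * l ≤ |b y - c|} ⊆
      ((s ∩ {y | l < |b y - c|}) \ ⋃ x ∈ u, closedBall x (R x)) ∪
        ⋃ x ∈ u, ((ball x (R x) ∩ {y | l ≤ |b y - ballAvg μ b x (R x)|}) ∪ sphere x (R x)) := by
    rintro y ⟨hys, hy : 2 * l ≤ |b y - c|⟩
    by_cases hyU : y ∈ ⋃ x ∈ u, closedBall x (R x)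
    · obtain ⟨x, hx, hyx⟩ := mem_iUnion₂.1 hyU
      refine Or.inr (mem_biUnion hx ?_)
      rcases (mem_closedBall.1 hyx).lt_or_eq with hlt | heq
      · refine Or.inl ⟨hlt, show l ≤ _ from ?_⟩
        linarith [havg x hx, abs_sub_le (b y) (ballAvg μ b x (R x)) c]
      · exact Or.inr heq
    · exact Or.inl ⟨⟨hys, show l < _ by linarith⟩, hyU⟩
  calc μ (s ∩ {y | 2 * l ≤ |b y - c|})
      ≤ μ ((s ∩ {y | l < |b y - c|}) \ ⋃ x ∈ u, closedBall x (R x)) +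
        μ (⋃ x ∈ u, ((ball x (R x) ∩ {y | l ≤ |b y - ballAvg μ b x (R x)|}) ∪ sphere x (R x))) :=
        (measure_mono hcover).trans (measure_union_le _ _)
    _ ≤ ∑' x : u, μ ((ball x (R x) ∩ {y | l ≤ |b y - ballAvg μ b x (R x)|}) ∪ sphere x (R x)) := by
        rw [hnull, zero_add]
        exact measure_biUnion_le μ hu _
    _ ≤ ∑' x : u, μ (ball x (R x) ∩ {y | l ≤ |b y - ballAvg μ b x (R x)|}) :=
        ENNReal.tsum_le_tsum fun x => (measure_union_le _ _).trans_eq <| by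
          rw [Measure.addHaar_sphere_of_ne_zero μ _ (hR x x.2), add_zero]

lemma measure_levelSet_le_tsum (hb : LocallyIntegrable b μ) (hosc : MeanOscLe μ b 1) (x₀ : E)
    {ρ l : ℝ} (hρ : 0 < ρ) (hl : 10 ^ d * twoBallConst d < l) :
    ∃ (u : Set E) (r : E → ℝ), u.Countable ∧ (∀ x ∈ u, 0 < r x) ∧
      ∑' x : u, μ (ball x (r x)) ≤ ENNReal.ofReal (twoBallConst d / l) * μ (ball x₀ ρ) ∧
      μ (ball x₀ ρ ∩ {y | 2 * l ≤ |b y - ballAvg μ b x₀ ρ|}) ≤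
        ∑' x : u, μ (ball x (5 * r x) ∩ {y | l ≤ |b y - ballAvg μ b x (5 * r x)|}) := by
  set c := ballAvg μ b x₀ ρ
  have hl0 : 0 < l := (mul_pos (by positivity) (twoBallConst_pos d)).trans hl
  obtain ⟨u, r, hu, hdisj, hprop, hnull⟩ := exists_czFamily hb hosc x₀ ρ hl
  refine ⟨u, r, hu, fun x hx => (hprop x hx).2.1, ?_, ?_⟩
  · have hsub : ∀ x ∈ u, ball x (r x) ⊆ ball x₀ (2 * ρ) := fun x hx => ball_subset_ball' <| by
      have := (hprop x hx).2.2.1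
      have : dist x x₀ < ρ := (hprop x hx).1
      linarith
    calc ∑' x : u, μ (ball x (r x)) ≤ ENNReal.ofReal (ballDev μ b c x₀ (2 * ρ) / l) :=
          tsum_measure_ball_le hb hl0 hu (hdisj.mono fun x => ball_subset_closedBall) hsub
            fun x hx => (hprop x hx).2.2.2.1.le
      _ ≤ ENNReal.ofReal (twoBallConst d * μ.real (ball x₀ ρ) / l) := by
          gcongr
          exact ballDev_two_mul_le hb hosc x₀ hρ
      _ = ENNReal.ofReal (twoBallConst d / l) * μ (ball x₀ ρ) := by
          rw [mul_div_right_comm, ENNReal.ofReal_mul (div_pos (twoBallConst_pos d) hl0).le,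
            ofReal_measureReal measure_ball_lt_top.ne]
  · have h5r : ∀ x ∈ u, 0 < 5 * r x := fun x hx => by linarith [(hprop x hx).2.1]
    refine measure_levelSet_le_tsum_of_cover hu (fun x hx => (h5r x hx).ne') (fun x hx => ?_) hnull
      hl0
    exact le_of_mul_le_mul_right ((abs_ballAvg_sub_mul_le hb c x _).trans (hprop x hx).2.2.2.2)
      (measureReal_ball_pos x (h5r x hx))

lemma LevelSetDecay.succ (hb : LocallyIntegrable b μ) (hosc : MeanOscLe μ b 1) {k : ℕ} {M : ℝ}
    (hM : 0 ≤ M) (h : LevelSetDecay μ b k M) :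
    LevelSetDecay μ b (k + 1) (max (M * 5 ^ d * twoBallConst d * 2 ^ (k + 1))
      ((2 * 10 ^ d * twoBallConst d) ^ (k + 1))) := by
  intro x₀ ρ hρ t ht
  have hΛ := twoBallConst_pos d
  rcases le_or_gt t (2 * 10 ^ d * twoBallConst d) with htT | hTt
  · refine (measure_mono inter_subset_left).trans (le_mul_of_one_le_left zero_le ?_)
    refine ENNReal.one_le_ofReal.2 ((one_le_div (by positivity)).2 ?_)
    exact (pow_le_pow_left₀ ht.le htT _).trans (le_max_right _ _)
  obtain ⟨l, rfl⟩ : ∃ l, t = 2 * l := ⟨t / 2, by ring⟩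
  have hl : 10 ^ d * twoBallConst d < l := by linarith
  have hl0 : 0 < l := (mul_pos (by positivity) hΛ).trans hl
  obtain ⟨u, r, hu, hr, hsum, hlevel⟩ := measure_levelSet_le_tsum hb hosc x₀ hρ hl
  calc μ (ball x₀ ρ ∩ {y | 2 * l ≤ |b y - ballAvg μ b x₀ ρ|})
      ≤ ∑' x : u, μ (ball x (5 * r x) ∩ {y | l ≤ |b y - ballAvg μ b x (5 * r x)|}) := hlevel
    _ ≤ ∑' x : u, ENNReal.ofReal (M / l ^ k * 5 ^ d) * μ (ball x (r x)) := by
        refine ENNReal.tsum_le_tsum fun x =>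
          (h x _ (by linarith [hr x x.2]) l hl0).trans_eq ?_
        rw [measure_ball_mul _ (by norm_num : (0 : ℝ) < 5), ← mul_assoc,
          ← ENNReal.ofReal_mul (by positivity)]
    _ ≤ ENNReal.ofReal (M / l ^ k * 5 ^ d) *
          (ENNReal.ofReal (twoBallConst d / l) * μ (ball x₀ ρ)) := by
        rw [ENNReal.tsum_mul_left]
        gcongr
    _ = ENNReal.ofReal (M * 5 ^ d * twoBallConst d * 2 ^ (k + 1) / (2 * l) ^ (k + 1)) *
          μ (ball x₀ ρ) := by
        rw [← mul_assoc, ← ENNReal.ofReal_mul (by positivity)]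
        congr 2
        field_simp
        ring
    _ ≤ _ := by gcongr; exact le_max_left _ _

def decayConst (n : ℕ) : ℕ → ℝ
  | 0 => 1
  | k + 1 => max (decayConst n k * 5 ^ n * twoBallConst n * 2 ^ (k + 1))
      ((2 * 10 ^ n * twoBallConst n) ^ (k + 1))

lemma decayConst_nonneg (n k : ℕ) : 0 ≤ decayConst n k := by
  cases k with
  | zero => exact zero_le_one
  | succ k =>
    have := twoBallConst_pos n
    exact (by positivity : (0 : ℝ) ≤ _).trans (le_max_right _ _)

lemma levelSetDecay (hb : LocallyIntegrable b μ) (hosc : MeanOscLe μ b 1) :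
    ∀ k, LevelSetDecay μ b k (decayConst d k)
  | 0 => fun x r _ t _ => by simpa [decayConst] using measure_mono inter_subset_left
  | k + 1 => (levelSetDecay hb hosc k).succ hb hosc (decayConst_nonneg _ k)

def momentConst (n : ℕ) (p : ℝ) : ℝ :=
  1 + decayConst n (⌊p⌋₊ + 1) * 2 ^ p / (1 - 2 ^ p / 2 ^ (⌊p⌋₊ + 1))

lemma momentConst_nonneg (n : ℕ) (p : ℝ) : 0 ≤ momentConst n p := by
  have := decayConst_nonneg n (⌊p⌋₊ + 1)
  have := two_rpow_div_two_pow_lt_one (by exact_mod_cast Nat.lt_floor_add_one p : p < ↑(⌊p⌋₊ + 1))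
  unfold momentConst
  have : 0 < 1 - (2 : ℝ) ^ p / 2 ^ (⌊p⌋₊ + 1) := by linarith
  positivity

lemma lintegral_rpow_le_of_meanOscLe_one (hb : LocallyIntegrable b μ) (hosc : MeanOscLe μ b 1)
    {p : ℝ} (hp : 0 ≤ p) (x₀ : E) {ρ : ℝ} (hρ : 0 < ρ) :
    ∫⁻ y in ball x₀ ρ, ENNReal.ofReal |b y - ballAvg μ b x₀ ρ| ^ p ∂μ ≤
      ENNReal.ofReal (momentConst d p) * μ (ball x₀ ρ) :=
  lintegral_ofReal_rpow_le_of_tail (integrableOn_abs_sub hb _ x₀ ρ).aemeasurable hp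
    (by exact_mod_cast Nat.lt_floor_add_one p) (decayConst_nonneg _ _)
    (Measure.restrict_apply_univ _).le fun t ht => by
      rw [Measure.restrict_apply' measurableSet_ball, inter_comm]
      exact levelSetDecay hb hosc _ x₀ ρ hρ t ht

lemma lintegral_rpow_le_of_meanOscLe (hb : LocallyIntegrable b μ) {a : ℝ} (ha : 0 < a)
    (hosc : MeanOscLe μ b a) {p : ℝ} (hp : 0 ≤ p) (x₀ : E) {ρ : ℝ} (hρ : 0 < ρ) :
    ∫⁻ y in ball x₀ ρ, ENNReal.ofReal |b y - ballAvg μ b x₀ ρ| ^ p ∂μ ≤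
      ENNReal.ofReal (momentConst d p * a ^ p) * μ (ball x₀ ρ) := by
  have hosc₁ : MeanOscLe μ (fun y => a⁻¹ * b y) 1 := by
    simpa only [inv_mul_cancel₀ ha.ne'] using hosc.const_mul (inv_nonneg.2 ha.le)
  have hscale : ∀ y, ENNReal.ofReal |b y - ballAvg μ b x₀ ρ| ^ p = ENNReal.ofReal (a ^ p) *
      ENNReal.ofReal |a⁻¹ * b y - ballAvg μ (fun y => a⁻¹ * b y) x₀ ρ| ^ p := by
    intro y
    rw [ballAvg_const_mul, ← mul_sub, abs_mul, abs_of_pos (inv_pos.2 ha),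
      ← ENNReal.ofReal_rpow_of_nonneg ha.le hp, ← ENNReal.mul_rpow_of_nonneg _ _ hp,
      ← ENNReal.ofReal_mul ha.le, mul_inv_cancel_left₀ ha.ne']
  calc ∫⁻ y in ball x₀ ρ, ENNReal.ofReal |b y - ballAvg μ b x₀ ρ| ^ p ∂μ
      = ENNReal.ofReal (a ^ p) * ∫⁻ y in ball x₀ ρ,
          ENNReal.ofReal |a⁻¹ * b y - ballAvg μ (fun y => a⁻¹ * b y) x₀ ρ| ^ p ∂μ := by
        simp_rw [hscale]
        exact lintegral_const_mul' _ _ ENNReal.ofReal_ne_top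
    _ ≤ ENNReal.ofReal (a ^ p) * (ENNReal.ofReal (momentConst d p) * μ (ball x₀ ρ)) := by
        gcongr
        exact lintegral_rpow_le_of_meanOscLe_one (hb.smul a⁻¹) hosc₁ hp x₀ hρ
    _ = ENNReal.ofReal (momentConst d p * a ^ p) * μ (ball x₀ ρ) := by
        rw [← mul_assoc, ← ENNReal.ofReal_mul (by positivity), mul_comm (a ^ p)]

lemma meanOscLe_of_bmoNorm_le {n : ℕ} {b : Rn n → ℝ} (hb : LocallyIntegrable b volume) {a : ℝ}
    (ha : 0 ≤ a) (hbmo : bmoNorm b ≤ ENNReal.ofReal a) : MeanOscLe volume b a := by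
  intro x r hr
  have hball : (∫⁻ y in ball x r, ENNReal.ofReal |b y - ballAvg volume b x r|) /
      volume (ball x r) ≤ bmoNorm b :=
    le_iSup_of_le x (le_iSup_of_le r (le_iSup_of_le hr le_rfl))
  rw [← ENNReal.ofReal_le_ofReal_iff (by positivity), ofReal_ballDev hb,
    ENNReal.ofReal_mul ha, ofReal_measureReal measure_ball_lt_top.ne]
  rw [ENNReal.div_le_iff_le_mul (Or.inl (measure_ball_pos volume x hr).ne')
    (Or.inl measure_ball_lt_top.ne)] at hball
  exact hball.trans (by gcongr)

lemma ofReal_abs_sq_sub_rpow (u β q : ℝ) :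
    ENNReal.ofReal |u ^ 2 - -β ^ 2 - 2 * β * u| ^ q = ENNReal.ofReal |u - β| ^ (2 * q) := by
  rw [show u ^ 2 - -β ^ 2 - 2 * β * u = |u - β| ^ 2 by rw [sq_abs]; ring,
    abs_of_nonneg (sq_nonneg _), ENNReal.ofReal_pow (abs_nonneg _), ← ENNReal.rpow_natCast,
    ← ENNReal.rpow_mul]
  norm_num

lemma ofReal_mul_rpow_two_mul_rpow_inv {C a q : ℝ} (hC : 0 ≤ C) (ha : 0 ≤ a) (hq : 0 < q) :
    ENNReal.ofReal (C * a ^ (2 * q)) ^ (1 / q) = ENNReal.ofReal (C ^ (1 / q) * a ^ 2) := by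
  rw [ENNReal.ofReal_rpow_of_nonneg (by positivity) (by positivity),
    Real.mul_rpow hC (by positivity), ← Real.rpow_natCast a 2, ← Real.rpow_mul ha]
  congr 3
  field_simp
  norm_num

lemma le_ofReal_mul_sq_of_forall_lt {L B : ℝ≥0∞} (hB : B ≠ ∞) {K : ℝ} (hK : 0 ≤ K)
    (h : ∀ a : ℝ, B.toReal < a → L ≤ ENNReal.ofReal (K * a ^ 2)) :
    L ≤ ENNReal.ofReal K * B ^ 2 := by
  have hlim : Tendsto (fun a : ℝ => ENNReal.ofReal (K * a ^ 2)) (𝓝[>] B.toReal)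
      (𝓝 (ENNReal.ofReal (K * B.toReal ^ 2))) :=
    ((ENNReal.continuous_ofReal.comp (continuous_const.mul (continuous_pow 2))).tendsto
      _).mono_left nhdsWithin_le_nhds
  rw [ENNReal.ofReal_mul hK, ENNReal.ofReal_pow ENNReal.toReal_nonneg,
    ENNReal.ofReal_toReal hB] at hlim
  exact ge_of_tendsto hlim (eventually_nhdsWithin_of_forall h)

end JohnNirenberg

open JohnNirenberg

/-- Accomazzo: if `b ∈ BMO` then `b² ∈ BMO_b^q`, quantitatively:
`sup_B inf_{c₀,c₁} (⨍_B |b² - c₀ - c₁ b|^q)^{1/q} ≤ C ‖b‖_{BMO}²` with `C = C(n,q)`. -/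
theorem stmt13 {n : ℕ} (q : ℝ) (hq : 1 ≤ q) :
    ∃ C : ℝ, 0 ≤ C ∧ ∀ b : Rn n → ℝ, IsBMO b → ∀ (x₀ : Rn n) (ρ : ℝ), 0 < ρ →
      (⨅ (c₀ : ℝ) (c₁ : ℝ),
          ((∫⁻ x in ball x₀ ρ, ENNReal.ofReal |b x ^ 2 - c₀ - c₁ * b x| ^ q) /
            volume (ball x₀ ρ)) ^ (1 / q)) ≤
        ENNReal.ofReal C * bmoNorm b ^ 2 := by
  have hq0 : 0 < q := zero_lt_one.trans_le hq
  set C := momentConst (finrank ℝ (Rn n)) (2 * q)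
  have hC : 0 ≤ C := momentConst_nonneg _ _
  refine ⟨C ^ (1 / q), by positivity,
    fun b ⟨hb, hbmo⟩ x₀ ρ hρ => le_ofReal_mul_sq_of_forall_lt hbmo.ne (by positivity) ?_⟩
  -- `‖b‖_BMO` may vanish, so we normalise by an arbitrary `a > ‖b‖_BMO` instead.
  intro a ha
  have ha0 : 0 < a := ENNReal.toReal_nonneg.trans_lt ha
  have hosc : MeanOscLe volume b a := meanOscLe_of_bmoNorm_le hb ha0.le
    ((ENNReal.le_ofReal_iff_toReal_le hbmo.ne ha0.le).2 ha.le)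
  set β := ballAvg volume b x₀ ρ
  calc (⨅ (c₀ : ℝ) (c₁ : ℝ), ((∫⁻ x in ball x₀ ρ, ENNReal.ofReal |b x ^ 2 - c₀ - c₁ * b x| ^ q) /
          volume (ball x₀ ρ)) ^ (1 / q))
      ≤ ((∫⁻ x in ball x₀ ρ, ENNReal.ofReal |b x - β| ^ (2 * q)) /
          volume (ball x₀ ρ)) ^ (1 / q) := by
        refine iInf₂_le_of_le (-β ^ 2) (2 * β) (le_of_eq ?_)
        simp_rw [ofReal_abs_sq_sub_rpow]
    _ ≤ ENNReal.ofReal (C * a ^ (2 * q)) ^ (1 / q) := by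
        gcongr
        exact ENNReal.div_le_of_le_mul
          (lintegral_rpow_le_of_meanOscLe hb ha0 hosc (by positivity) x₀ hρ)
    _ = ENNReal.ofReal (C ^ (1 / q) * a ^ 2) :=
        ofReal_mul_rpow_two_mul_rpow_inv hC ha0.le hq0
end
end

section
/- Let b ∈ BMO, δ ∈ (0,1), let h be a measurable function on ℝⁿ, let G : ℝⁿ → [0,∞], and suppose that to every ball B a real number γ_B is assigned such that |γ_B| ≤ G(x) whenever x ∈ B. Then there is a constant C depending only on n and δ such that for every x ∈ ℝⁿ: M_{♯,δ}(h)(x) ≤ C ( sup over balls B containing x of inf_{c₁∈ℝ} (⨍_B |h(y) − c₁ − γ_B b(y)|^δ dy)^{1/δ} + ‖b‖_{BMO} G(x) ). -/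
open MeasureTheory Metric Set
open scoped ENNReal NNReal BigOperators

noncomputable section

/-- The sharp maximal function `M_{♯,δ} h(x) = sup_{B ∋ x} inf_c (⨍_B |h - c|^δ)^{1/δ}`. -/
def sharpMax {n : ℕ} (δ : ℝ) (h : Rn n → ℝ) (x : Rn n) : ℝ≥0∞ :=
  ⨆ (c : Rn n) (r : ℝ) (_ : 0 < r) (_ : x ∈ ball c r),
    ⨅ c₀ : ℝ,
      ((∫⁻ y in ball c r, ENNReal.ofReal |h y - c₀| ^ δ) / volume (ball c r)) ^ (1 / δ)

/-!
Averages over a set `s` are integrals against the conditional probability measure `μ[|s]`, so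
`(⨍_B |f|^δ)^{1/δ}` is `eLpNorm' f δ volume[|B]`, which for `δ ≤ 1` is a quasi-norm with constant
`2^{1/δ-1}`. Testing the infimum defining `M_{♯,δ} h` on `B` at `c₁ + γ_B b_B` splits `h - c` as
`(h - c₁ - γ_B b) + γ_B (b - b_B)`, and by Hölder the `δ`-mean of `b - b_B` is at most its mean,
hence at most `‖b‖_{BMO}`. With `|γ_B| ≤ G(x)` this gives the estimate with `C = 2^{1/δ-1}`.
-/

open ProbabilityTheory

lemma eLpNorm'_cond_eq {α : Type*} [MeasurableSpace α] (μ : Measure α) (s : Set α) (δ : ℝ)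
    (f : α → ℝ) :
    eLpNorm' f δ μ[|s] = ((∫⁻ y in s, ENNReal.ofReal |f y| ^ δ ∂μ) / μ s) ^ (1 / δ) := by
  rw [eLpNorm', ProbabilityTheory.cond, lintegral_smul_measure]
  simp only [Real.enorm_eq_ofReal_abs, smul_eq_mul, div_eq_mul_inv, mul_comm]

lemma isProbabilityMeasure_cond_ball {X : Type*} [PseudoMetricSpace X] [ProperSpace X]
    [MeasurableSpace X] [OpensMeasurableSpace X] (μ : Measure X) [μ.IsOpenPosMeasure]
    [IsFiniteMeasureOnCompacts μ] (x : X) {r : ℝ} (hr : 0 < r) :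
    IsProbabilityMeasure μ[|ball x r] :=
  cond_isProbabilityMeasure_of_finite (measure_ball_pos μ x hr).ne' measure_ball_lt_top.ne

lemma iInf_eLpNorm'_sub_const_le {α : Type*} [MeasurableSpace α] {ν : Measure α} {δ : ℝ}
    (hδ0 : 0 < δ) (hδ1 : δ ≤ 1) {h b : α → ℝ} (hh : AEStronglyMeasurable h ν)
    (hb : AEStronglyMeasurable b ν) (γ β : ℝ) :
    ⨅ c₀ : ℝ, eLpNorm' (fun y => h y - c₀) δ ν ≤
      2 ^ (1 / δ - 1) * ((⨅ c₁ : ℝ, eLpNorm' (fun y => h y - c₁ - γ * b y) δ ν) +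
        ‖γ‖ₑ * eLpNorm' (fun y => b y - β) δ ν) := by
  rw [ENNReal.iInf_add, ENNReal.mul_iInf_of_ne (by positivity) (by simp)]
  refine le_iInf fun c₁ => (iInf_le _ (c₁ + γ * β)).trans ?_
  have hsplit : (fun y => h y - (c₁ + γ * β)) =
      (fun y => h y - c₁ - γ * b y) + γ • fun y => b y - β := by
    ext y
    simp only [Pi.add_apply, Pi.smul_apply, smul_eq_mul]
    ring
  rw [hsplit, ← eLpNorm'_const_smul γ hδ0]
  exact eLpNorm'_add_le_of_le_one (by fun_prop) hδ0.le hδ1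

lemma eLpNorm'_cond_ball_sub_average_le_bmoNorm {n : ℕ} {b : Rn n → ℝ}
    (hb : AEStronglyMeasurable b volume) {δ : ℝ} (hδ0 : 0 < δ) (hδ1 : δ ≤ 1) (x : Rn n) {r : ℝ}
    (hr : 0 < r) :
    eLpNorm' (fun y => b y - ⨍ z in ball x r, b z) δ volume[|ball x r] ≤ bmoNorm b := by
  have := isProbabilityMeasure_cond_ball volume x hr
  calc eLpNorm' (fun y => b y - ⨍ z in ball x r, b z) δ volume[|ball x r]
      ≤ eLpNorm' (fun y => b y - ⨍ z in ball x r, b z) 1 volume[|ball x r] :=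
        eLpNorm'_le_eLpNorm'_of_exponent_le hδ0 hδ1 _
          ((hb.mono_ac cond_absolutelyContinuous).sub aestronglyMeasurable_const)
    _ = (∫⁻ y in ball x r, ENNReal.ofReal |b y - ⨍ z in ball x r, b z|) / volume (ball x r) := by
        simp [eLpNorm'_cond_eq]
    _ ≤ bmoNorm b := le_iSup₂_of_le x r (le_iSup_of_le hr le_rfl)

/-- abstract pointwise sharp-maximal estimate: if to every ball `B` (given by
its center and radius) a number `γ_B` is assigned with `|γ_B| ≤ G(x)` for `x ∈ B`, then
`M_{♯,δ}(h)(x) ≤ C (sup_{B ∋ x} inf_{c₁} (⨍_B |h - c₁ - γ_B b|^δ)^{1/δ} + ‖b‖_{BMO} G(x))`. -/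
theorem stmt18 {n : ℕ} (δ : ℝ) (hδ0 : 0 < δ) (hδ1 : δ < 1) :
    ∃ C : ℝ, 0 ≤ C ∧ ∀ b : Rn n → ℝ, IsBMO b → ∀ h : Rn n → ℝ, Measurable h →
      ∀ G : Rn n → ℝ≥0∞, ∀ γ : Rn n → ℝ → ℝ,
      (∀ (c : Rn n) (r : ℝ), 0 < r → ∀ x ∈ ball c r, ENNReal.ofReal |γ c r| ≤ G x) →
      ∀ x : Rn n,
      sharpMax δ h x ≤
        ENNReal.ofReal C *
          ((⨆ (c : Rn n) (r : ℝ) (_ : 0 < r) (_ : x ∈ ball c r),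
              ⨅ c₁ : ℝ,
                ((∫⁻ y in ball c r, ENNReal.ofReal |h y - c₁ - γ c r * b y| ^ δ) /
                  volume (ball c r)) ^ (1 / δ)) +
            bmoNorm b * G x) := by
  refine ⟨2 ^ (1 / δ - 1), by positivity, fun b hb h hh G γ hγ x => ?_⟩
  rw [← ENNReal.ofReal_rpow_of_pos two_pos, ENNReal.ofReal_ofNat]
  simp only [sharpMax, ← eLpNorm'_cond_eq]
  refine iSup₂_le fun c r => iSup₂_le fun hr hx => ?_
  have hb' := hb.1.aestronglyMeasurable
  calc ⨅ c₀ : ℝ, eLpNorm' (fun y => h y - c₀) δ volume[|ball c r]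
      ≤ 2 ^ (1 / δ - 1) * ((⨅ c₁ : ℝ, eLpNorm' (fun y => h y - c₁ - γ c r * b y) δ
          volume[|ball c r]) + ‖γ c r‖ₑ *
          eLpNorm' (fun y => b y - ⨍ z in ball c r, b z) δ volume[|ball c r]) :=
        iInf_eLpNorm'_sub_const_le hδ0 hδ1.le hh.aestronglyMeasurable
          (hb'.mono_ac cond_absolutelyContinuous) _ _
    _ ≤ _ := by
        gcongr _ * (?_ + ?_)
        · exact le_iSup₂_of_le c r (le_iSup₂_of_le hr hx le_rfl)
        · rw [mul_comm, Real.enorm_eq_ofReal_abs]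
          exact mul_le_mul' (eLpNorm'_cond_ball_sub_average_le_bmoNorm hb' hδ0 hδ1.le c hr)
            (hγ c r hr x hx)
end
end
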